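/- arXiv:2001.04237 — 2 statements merged into one kernel-verified Lean document; each statement's English description precedes it below -/
import Mathlib

section
/- Let μ, ν be natural numbers with 0 ≤ ν ≤ μ, and let α be the sequence α_s = (μ-ν+1)/(s+μ+1). Then the weights of the α-average satisfy \hat{α}^{(n)}_1 = C(n+ν-1, n-1)/C(n+μ, n-1) and \hat{α}^{(n)}_r = ((μ-ν+1)/(r+μ)) · C(n+ν-1, n-r)/C(n+μ, n-r) for 2 ≤ r ≤ n, where C(a,b) denotes the binomial coefficient. -/
/-!
Since `1 - α_s = (s + ν) / (s + μ + 1)`, the product `∏_{s=r}^{n-1} (1 - α_s)` is a quotient of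
two rising factorials of length `n - r`; each equals `(n - r)!` times a binomial coefficient, and
the factorials cancel.
-/

open Finset Nat

theorem prod_Ico_add_eq_factorial_mul_choose (c r k : ℕ) :
    ∏ s ∈ Ico r (r + k), (s + c) = k ! * (r + c + k - 1).choose k := by
  rw [← Nat.ascFactorial_eq_factorial_mul_choose', Nat.ascFactorial_eq_prod_range,
    prod_Ico_eq_prod_range, Nat.add_sub_cancel_left]
  exact prod_congr rfl fun i _ => by ring

theorem prod_Icc_div_eq_choose_div_choose (μ ν : ℕ) {r n : ℕ} (hr : 1 ≤ r) (hrn : r ≤ n) :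
    ∏ s ∈ Icc r (n - 1), ((s : ℝ) + ν) / ((s : ℝ) + μ + 1)
      = ((n + ν - 1).choose (n - r) : ℝ) / ((n + μ).choose (n - r) : ℝ) := by
  obtain ⟨k, rfl⟩ := Nat.exists_eq_add_of_le hrn
  have hIcc : Icc r (r + k - 1) = Ico r (r + k) := by
    ext s; simp only [mem_Icc, mem_Ico]; omega
  have hnum : ∏ s ∈ Ico r (r + k), ((s : ℝ) + ν) = k ! * (r + k + ν - 1).choose k := by
    rw [show r + k + ν - 1 = r + ν + k - 1 by omega]
    exact_mod_cast prod_Ico_add_eq_factorial_mul_choose ν r k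
  have hden : ∏ s ∈ Ico r (r + k), ((s : ℝ) + μ + 1) = k ! * (r + k + μ).choose k := by
    rw [show r + k + μ = r + (μ + 1) + k - 1 by omega]
    exact_mod_cast prod_Ico_add_eq_factorial_mul_choose (μ + 1) r k
  rw [hIcc, prod_div_distrib, Nat.add_sub_cancel_left, hnum, hden]
  exact mul_div_mul_left _ _ (by positivity)

theorem alpha_average_binomial_weights_general
    (μ ν : ℕ)
    (α : ℕ → ℝ) (hαdef : ∀ s, α s = ((μ : ℝ) - ν + 1) / ((s : ℝ) + μ + 1)) :
    ∀ n, 1 ≤ n →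
      (∏ s ∈ Finset.Icc 1 (n - 1), (1 - α s))
          = ((n + ν - 1).choose (n - 1) : ℝ) / ((n + μ).choose (n - 1) : ℝ)
      ∧ ∀ r, 2 ≤ r → r ≤ n →
          α (r - 1) * ∏ s ∈ Finset.Icc r (n - 1), (1 - α s)
            = ((μ : ℝ) - ν + 1) / ((r : ℝ) + μ)
              * (((n + ν - 1).choose (n - r) : ℝ) / ((n + μ).choose (n - r) : ℝ)) := by
  have one_sub_α : ∀ s : ℕ, 1 - α s = ((s : ℝ) + ν) / ((s : ℝ) + μ + 1) := by
    intro s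
    rw [hαdef, eq_div_iff (by positivity)]
    field_simp
    ring
  intro n hn
  simp only [one_sub_α]
  refine ⟨prod_Icc_div_eq_choose_div_choose μ ν le_rfl hn, fun r hr hrn => ?_⟩
  rw [prod_Icc_div_eq_choose_div_choose μ ν (by omega) hrn, hαdef, Nat.cast_sub (by omega)]
  congr 2
  push_cast
  ring

/-- For the weight sequence α_s = (μ-ν+1)/(s+μ+1) with naturals ν ≤ μ,
the weights of the α-average are
α̂⁽ⁿ⁾₁ = C(n+ν-1, n-1)/C(n+μ, n-1) and
α̂⁽ⁿ⁾_r = ((μ-ν+1)/(r+μ)) · C(n+ν-1, n-r)/C(n+μ, n-r) for 2 ≤ r ≤ n. -/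
theorem alpha_average_binomial_weights
    (μ ν : ℕ) (hνμ : ν ≤ μ)
    (α : ℕ → ℝ) (hαdef : ∀ s, α s = ((μ : ℝ) - ν + 1) / ((s : ℝ) + μ + 1)) :
    ∀ n, 1 ≤ n →
      (∏ s ∈ Finset.Icc 1 (n - 1), (1 - α s))
          = ((n + ν - 1).choose (n - 1) : ℝ) / ((n + μ).choose (n - 1) : ℝ)
      ∧ ∀ r, 2 ≤ r → r ≤ n →
          α (r - 1) * ∏ s ∈ Finset.Icc r (n - 1), (1 - α s)
            = ((μ : ℝ) - ν + 1) / ((r : ℝ) + μ)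
              * (((n + ν - 1).choose (n - r) : ℝ) / ((n + μ).choose (n - r) : ℝ)) :=
  alpha_average_binomial_weights_general μ ν α hαdef
end

section
/- Let 0 < α < 1, let N ≥ 1, and let y = (y_0, y_1, y_2, ...) be a bounded real sequence with limit exponential average \bar{δ} = α ∑_{s=0}^{∞} (1-α)^s y_s and limit N-moving exponential average \bar{Δ}^N = (1-α)^{N-1} y_{N-1} + α ∑_{s=0}^{N-2} (1-α)^s y_s. Assume y is admissible in the sense that \bar{δ} > 0, α ∑_{s=0}^{∞} (1-α)^s y_{N+s} = \bar{δ}, and |\bar{δ} - y_{N-1}| < \bar{δ}. Then |\bar{δ} - \bar{Δ}^N| / \bar{δ} < (1-α)^N. -/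
/-!
Splitting off the first `N` terms of the exponential average `δ̄` and using that the tail
average equals `δ̄` gives `δ̄ = α ∑_{s<N} (1-α)^s y_s + (1-α)^N δ̄`, whence
`δ̄ - Δ̄^N = (1-α)^N (δ̄ - y_{N-1})`; admissibility bounds the last factor by `δ̄`.
-/

open Finset

noncomputable section

def expAvg (α : ℝ) (y : ℕ → ℝ) : ℝ := α * ∑' s, (1 - α) ^ s * y s

def movingExpAvg (α : ℝ) (N : ℕ) (y : ℕ → ℝ) : ℝ :=
  (1 - α) ^ (N - 1) * y (N - 1) + α * ∑ s ∈ range (N - 1), (1 - α) ^ s * y s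

end

theorem tsum_pow_mul_eq_sum_add_pow_mul_tsum {R : Type*} [DivisionRing R] [TopologicalSpace R]
    [IsTopologicalRing R] [T2Space R] {r : R} {y : ℕ → R} (hy : Summable fun s ↦ r ^ s * y s)
    (N : ℕ) :
    ∑' s, r ^ s * y s = ∑ s ∈ range N, r ^ s * y s + r ^ N * ∑' s, r ^ s * y (N + s) := by
  rw [← hy.sum_add_tsum_nat_add N, ← tsum_mul_left]
  congr 1
  exact tsum_congr fun s ↦ by rw [add_comm s N, pow_add, mul_assoc]

-- A divergent series has `tsum` equal to `0`, so a nonzero average forces summability.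
theorem summable_of_expAvg_ne_zero {α : ℝ} {y : ℕ → ℝ} (h : expAvg α y ≠ 0) :
    Summable fun s ↦ (1 - α) ^ s * y s := by
  by_contra hy
  exact h (by rw [expAvg, tsum_eq_zero_of_not_summable hy, mul_zero])

theorem expAvg_sub_movingExpAvg {α : ℝ} {y : ℕ → ℝ} (N : ℕ)
    (hy : Summable fun s ↦ (1 - α) ^ s * y s)
    (htail : expAvg α (fun s ↦ y (N + s)) = expAvg α y) :
    expAvg α y - movingExpAvg α N y = (1 - α) ^ N * (expAvg α y - y (N - 1)) := by
  have hsplit : expAvg α y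
      = α * ∑ s ∈ range N, (1 - α) ^ s * y s + (1 - α) ^ N * expAvg α y := by
    conv_lhs => rw [expAvg, tsum_pow_mul_eq_sum_add_pow_mul_tsum hy N]
    rw [← htail, expAvg]
    ring
  rcases N with _ | n
  · simp [movingExpAvg]
  · rw [sum_range_succ] at hsplit
    rw [movingExpAvg, Nat.add_sub_cancel]
    linear_combination hsplit

theorem ea_mea_relative_error_general
    (α : ℝ) (hα1 : α < 1)
    (N : ℕ)
    (y : ℕ → ℝ)
    (δbar : ℝ) (hδbar : δbar = α * ∑' s : ℕ, (1 - α) ^ s * y s)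
    (Δbar : ℝ)
    (hΔbar : Δbar = (1 - α) ^ (N - 1) * y (N - 1)
        + α * ∑ s ∈ Finset.range (N - 1), (1 - α) ^ s * y s)
    (hpos : 0 < δbar)
    (htail : α * (∑' s : ℕ, (1 - α) ^ s * y (N + s)) = δbar)
    (hclose : |δbar - y (N - 1)| < δbar) :
    |δbar - Δbar| / δbar < (1 - α) ^ N := by
  change δbar = expAvg α y at hδbar
  change Δbar = movingExpAvg α N y at hΔbar
  change expAvg α (fun s ↦ y (N + s)) = δbar at htail
  subst hδbar hΔbar
  have hr : 0 < (1 - α) ^ N := pow_pos (sub_pos.2 hα1) N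
  rw [expAvg_sub_movingExpAvg N (summable_of_expAvg_ne_zero hpos.ne') htail, abs_mul,
    abs_of_pos hr, div_lt_iff₀ hpos]
  exact mul_lt_mul_of_pos_left hclose hr

/-- For 0 < α < 1, N ≥ 1 and a bounded admissible sequence y (i.e. the
limit exponential average δ̄ = α∑_{s=0}^∞ (1-α)^s y_s is positive, the tail exponential
average α∑_{s=0}^∞ (1-α)^s y_{N+s} equals δ̄, and |δ̄ - y_{N-1}| < δ̄), the limit
N-moving exponential average Δ̄^N = (1-α)^{N-1} y_{N-1} + α∑_{s=0}^{N-2} (1-α)^s y_s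
satisfies |δ̄ - Δ̄^N| / δ̄ < (1-α)^N. -/
theorem ea_mea_relative_error
    (α : ℝ) (hα0 : 0 < α) (hα1 : α < 1)
    (N : ℕ) (hN : 1 ≤ N)
    (y : ℕ → ℝ) (hy : ∃ C, ∀ s, |y s| ≤ C)
    (δbar : ℝ) (hδbar : δbar = α * ∑' s : ℕ, (1 - α) ^ s * y s)
    (Δbar : ℝ)
    (hΔbar : Δbar = (1 - α) ^ (N - 1) * y (N - 1)
        + α * ∑ s ∈ Finset.range (N - 1), (1 - α) ^ s * y s)
    (hpos : 0 < δbar)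
    (htail : α * (∑' s : ℕ, (1 - α) ^ s * y (N + s)) = δbar)
    (hclose : |δbar - y (N - 1)| < δbar) :
    |δbar - Δbar| / δbar < (1 - α) ^ N :=
  ea_mea_relative_error_general α hα1 N y δbar hδbar Δbar hΔbar hpos htail hclose
end
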